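/- arXiv:2112.11379 — 3 statements merged into one kernel-verified Lean document; each statement's English description precedes it below -/
import Mathlib

section
/- Let n, r be integers with 0 \leq n \leq r. Then \int_0^{\infty} t^r H_n(t) e^{-t^2} dt = \frac{r!}{2 (r-n)!} \Gamma\left(\frac{r-n+1}{2}\right). -/
open MeasureTheory

/-- The physicists' Hermite polynomials, via the recurrence
`H_{n+1}(x) = 2x H_n(x) - H_n'(x)`, equivalent to
`H_n(x) = (-1)^n e^{x^2} (d/dx)^n e^{-x^2}`. -/
noncomputable def hermiteH : ℕ → Polynomial ℤ
  | 0 => 1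
  | n + 1 => 2 * Polynomial.X * hermiteH n - Polynomial.derivative (hermiteH n)

/-- Evaluation of the `n`-th Hermite polynomial at a real number. -/
noncomputable def Hr (n : ℕ) (x : ℝ) : ℝ := Polynomial.aeval x (hermiteH n)

/-!
Integrating by parts against the Gaussian: for every real polynomial `p`,
`(p e^{-t²})' = (p' - 2tp) e^{-t²}` and `p e^{-t²} → 0` at infinity, so
`∫₀^∞ (p' - 2tp) e^{-t²} = -p(0)`. Taking `p = t^{m+1} H_n` and using
`H_{n+1} = 2tH_n - H_n'` gives `∫₀^∞ t^{m+1} H_{n+1} e^{-t²} = (m+1) ∫₀^∞ t^m H_n e^{-t²}`,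
which lowers `n` and `r` together until `n = 0`, where `∫₀^∞ t^k e^{-t²} = Γ((k+1)/2)/2`
by the substitution `u = t²`.
-/

open Polynomial Real Set Filter

noncomputable def hermiteReal (n : ℕ) : ℝ[X] := (hermiteH n).map (Int.castRingHom ℝ)

lemma Hr_eq_eval_hermiteReal (n : ℕ) (x : ℝ) : Hr n x = (hermiteReal n).eval x := by
  rw [Hr, hermiteReal, eval_map, aeval_def]
  rfl

lemma hermiteReal_zero : hermiteReal 0 = 1 := by simp [hermiteReal, hermiteH]

lemma hermiteReal_succ (n : ℕ) :
    hermiteReal (n + 1) = 2 * X * hermiteReal n - derivative (hermiteReal n) := by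
  simp [hermiteReal, hermiteH, derivative_map]

lemma integrableOn_eval_mul_exp_neg_sq (p : ℝ[X]) :
    IntegrableOn (fun t ↦ p.eval t * exp (-t ^ 2)) (Ioi 0) := by
  induction p using Polynomial.induction_on' with
  | monomial n c =>
    refine IntegrableOn.congr_fun ((integrableOn_rpow_mul_exp_neg_rpow
      (neg_one_lt_zero.trans_le n.cast_nonneg) two_pos).const_mul c) (fun t _ ↦ ?_)
      measurableSet_Ioi
    simp only [eval_monomial, rpow_natCast, rpow_two]
    ring
  | add p q hp hq => simpa [add_mul] using hp.fun_add hq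

lemma tendsto_eval_mul_exp_neg_sq (p : ℝ[X]) :
    Tendsto (fun t ↦ p.eval t * exp (-t ^ 2)) atTop (nhds 0) := by
  refine squeeze_zero_norm' ?_ (by simpa using p.tendsto_div_exp_atTop.abs)
  filter_upwards [eventually_ge_atTop 1] with t ht
  rw [norm_mul, norm_of_nonneg (exp_pos _).le, abs_div, abs_of_pos (exp_pos _), div_eq_mul_inv,
    ← exp_neg, Real.norm_eq_abs]
  gcongr
  nlinarith

lemma hasDerivAt_eval_mul_exp_neg_sq (p : ℝ[X]) (x : ℝ) :
    HasDerivAt (fun t ↦ p.eval t * exp (-t ^ 2))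
      ((derivative p - 2 * X * p).eval x * exp (-x ^ 2)) x := by
  have hexp : HasDerivAt (fun t ↦ exp (-t ^ 2)) (exp (-x ^ 2) * -(2 * x)) x := by
    simpa using ((hasDerivAt_pow 2 x).neg).exp
  refine ((p.hasDerivAt x).fun_mul hexp).congr_deriv ?_
  simp only [eval_sub, eval_mul, eval_ofNat, eval_X]
  ring

lemma integral_eval_derivative_sub_mul_exp_neg_sq (p : ℝ[X]) :
    ∫ t in Ioi (0 : ℝ), (derivative p - 2 * X * p).eval t * exp (-t ^ 2) = -p.eval 0 := by
  rw [integral_Ioi_of_hasDerivAt_of_tendsto' (fun x _ ↦ hasDerivAt_eval_mul_exp_neg_sq p x)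
    (integrableOn_eval_mul_exp_neg_sq _) (tendsto_eval_mul_exp_neg_sq p)]
  simp

lemma integral_pow_mul_exp_neg_sq (r : ℕ) :
    ∫ t in Ioi (0 : ℝ), t ^ r * exp (-t ^ 2) = Gamma ((r + 1) / 2) / 2 := by
  have h := integral_rpow_mul_exp_neg_rpow two_pos (neg_one_lt_zero.trans_le r.cast_nonneg)
  simp only [rpow_natCast, rpow_two] at h
  rw [h]
  ring

lemma derivative_sub_mul_pow_mul_hermiteReal (n m : ℕ) :
    derivative (X ^ (m + 1) * hermiteReal n) - 2 * X * (X ^ (m + 1) * hermiteReal n) =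
      C ((m : ℝ) + 1) * (X ^ m * hermiteReal n) - X ^ (m + 1) * hermiteReal (n + 1) := by
  rw [derivative_mul, derivative_X_pow, hermiteReal_succ]
  push_cast
  ring

lemma integral_pow_succ_mul_hermite_succ (n m : ℕ) :
    ∫ t in Ioi (0 : ℝ), t ^ (m + 1) * Hr (n + 1) t * exp (-t ^ 2) =
      (m + 1) * ∫ t in Ioi (0 : ℝ), t ^ m * Hr n t * exp (-t ^ 2) := by
  have h := integral_eval_derivative_sub_mul_exp_neg_sq (X ^ (m + 1) * hermiteReal n)
  rw [derivative_sub_mul_pow_mul_hermiteReal, eval_mul, eval_pow, eval_X, zero_pow m.succ_ne_zero,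
    zero_mul, neg_zero] at h
  simp only [eval_sub, sub_mul] at h
  rw [integral_sub (integrableOn_eval_mul_exp_neg_sq _) (integrableOn_eval_mul_exp_neg_sq _)] at h
  simp only [eval_mul, eval_C, eval_pow, eval_X, mul_assoc, integral_const_mul] at h
  simp only [Hr_eq_eval_hermiteReal, mul_assoc]
  linarith

/-- For `0 ≤ n ≤ r`,
`∫_0^∞ t^r H_n(t) e^{-t^2} dt = r!/(2 (r-n)!) Γ((r-n+1)/2)`. -/
theorem integral_pow_mul_hermite_mul_gaussian (n r : ℕ) (h : n ≤ r) :
    (∫ t in Set.Ioi (0 : ℝ), t ^ r * Hr n t * Real.exp (-t ^ 2))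
      = (r.factorial : ℝ) / (2 * ((r - n).factorial : ℝ)) *
          Real.Gamma (((r : ℝ) - (n : ℝ) + 1) / 2) := by
  induction n generalizing r with
  | zero =>
    simp only [Hr_eq_eval_hermiteReal, hermiteReal_zero, eval_one, mul_one, Nat.sub_zero,
      CharP.cast_eq_zero, sub_zero, integral_pow_mul_exp_neg_sq]
    field_simp
  | succ n ih =>
    obtain ⟨m, rfl⟩ : ∃ m, r = m + 1 := ⟨r - 1, by omega⟩
    rw [integral_pow_succ_mul_hermite_succ, ih m (by omega), Nat.succ_sub_succ,
      Nat.factorial_succ]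
    push_cast
    rw [add_sub_add_right_eq_sub]
    ring
end

section
/- Fix a > 0 and \kappa \geq 2 an integer. The functions I_1(y) = e^{-2 a \beta y} and I_2(y) = e^{-2 a \beta y} \Gamma(2\kappa + 1, -4 a \beta y) are linearly independent solutions on (0,\infty) of the second order ODE y I''(y) - 2\kappa I'(y) - (4\kappa a \beta + 4 a^2 \beta^2 y) I(y) = 0, for any real \beta \neq 0. -/
/-- The (polynomially continued) upper incomplete Gamma function
`Γ(n+1, x) = n! e^{-x} ∑_{m=0}^n x^m/m!`, valid for all real `x`. -/
noncomputable def incGamma (n : ℕ) (x : ℝ) : ℝ :=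
  (n.factorial : ℝ) * Real.exp (-x) * ∑ m ∈ Finset.range (n + 1), x ^ m / (m.factorial : ℝ)

/-!
With `c = -2aβ` and `n = 2κ` the equation reads `y I'' - n I' - (c² y - n c) I = 0`, and it
holds for every real `y`. Since `d/dx Γ(n+1, x) = -xⁿ e^{-x}`, the function
`I₂(t) = e^{ct} Γ(n+1, 2ct)` satisfies `I₂' = c I₂ + h` with `h(t) = -2c (2ct)ⁿ e^{-ct}`, and
`y h' = (n - c y) h` cancels the inhomogeneous terms. For linear independence, `Γ(n+1, 2cy)` has
nonzero derivative at `y = 1`, so it is not locally constant there.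
-/

open Filter Topology Finset Real

lemma hasDerivAt_exp_neg_mul_sum_pow_div_factorial (n : ℕ) (x : ℝ) :
    HasDerivAt (fun x ↦ exp (-x) * ∑ m ∈ range (n + 1), x ^ m / (m.factorial : ℝ))
      (-(exp (-x) * (x ^ n / n.factorial))) x := by
  have hexp : HasDerivAt (fun x ↦ exp (-x)) (-exp (-x)) x := by
    simpa using (hasDerivAt_neg x).exp
  induction n with
  | zero => simpa using hexp
  | succ n ih =>
    have hterm := hexp.fun_mul ((hasDerivAt_pow (n + 1) x).div_const ((n + 1).factorial : ℝ))
    simp only [sum_range_succ _ (n + 1), mul_add]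
    refine (ih.fun_add hterm).congr_deriv ?_
    rw [Nat.factorial_succ, Nat.cast_mul, add_tsub_cancel_right]
    field_simp
    push_cast
    ring

lemma hasDerivAt_incGamma (n : ℕ) (x : ℝ) :
    HasDerivAt (incGamma n) (-(x ^ n * exp (-x))) x := by
  have hfac : (n.factorial : ℝ) ≠ 0 := by positivity
  have h := (hasDerivAt_exp_neg_mul_sum_pow_div_factorial n x).const_mul (n.factorial : ℝ)
  simp only [← mul_assoc] at h
  exact h.congr_deriv (by field_simp)

lemma hasDerivAt_incGamma_comp_mul (n : ℕ) (d t : ℝ) :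
    HasDerivAt (fun t ↦ incGamma n (d * t)) (-(d * (d * t) ^ n * exp (-(d * t)))) t :=
  ((hasDerivAt_incGamma n (d * t)).comp t ((hasDerivAt_id t).const_mul d)).congr_deriv
    (by simp only [mul_one]; ring)

lemma hasDerivAt_exp_mul (c t : ℝ) : HasDerivAt (fun t ↦ exp (c * t)) (c * exp (c * t)) t :=
  (((hasDerivAt_id t).const_mul c).exp).congr_deriv (by simp only [id, mul_one]; ring)

lemma hasDerivAt_exp_mul_incGamma (n : ℕ) (c d t : ℝ) :
    HasDerivAt (fun t ↦ exp (c * t) * incGamma n (d * t))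
      (c * (exp (c * t) * incGamma n (d * t)) - d * ((d * t) ^ n * exp ((c - d) * t))) t := by
  refine ((hasDerivAt_exp_mul c t).fun_mul (hasDerivAt_incGamma_comp_mul n d t)).congr_deriv ?_
  have hexp : exp ((c - d) * t) = exp (c * t) * exp (-(d * t)) := by
    rw [← exp_add]
    ring_nf
  rw [hexp]
  ring

lemma hasDerivAt_pow_mul_exp (n : ℕ) (d e t : ℝ) :
    HasDerivAt (fun t ↦ (d * t) ^ n * exp (e * t))
      (n * d * (d * t) ^ (n - 1) * exp (e * t) + e * ((d * t) ^ n * exp (e * t))) t := by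
  have hpow := ((hasDerivAt_id' t).const_mul d).fun_pow n
  exact (hpow.fun_mul (hasDerivAt_exp_mul e t)).congr_deriv (by ring)

lemma mul_natCast_mul_pow_sub_one (n : ℕ) (x : ℝ) : x * (n * x ^ (n - 1)) = n * x ^ n := by
  rcases eq_or_ne n 0 with rfl | hn
  · simp
  · rw [mul_left_comm, mul_pow_sub_one hn]

lemma exp_mul_solves_ode (n : ℕ) (c y : ℝ) :
    y * deriv (deriv fun t ↦ exp (c * t)) y - n * deriv (fun t ↦ exp (c * t)) y
      - (-(n * c) + c ^ 2 * y) * exp (c * y) = 0 := by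
  have hderiv : deriv (fun t ↦ exp (c * t)) = fun t ↦ c * exp (c * t) :=
    funext fun t ↦ (hasDerivAt_exp_mul c t).deriv
  rw [hderiv, ((hasDerivAt_exp_mul c y).const_mul c).deriv]
  ring

lemma exp_mul_incGamma_solves_ode (n : ℕ) (c d : ℝ) (hd : d = 2 * c) (y : ℝ) :
    y * deriv (deriv fun t ↦ exp (c * t) * incGamma n (d * t)) y
      - n * deriv (fun t ↦ exp (c * t) * incGamma n (d * t)) y
      - (-(n * c) + c ^ 2 * y) * (exp (c * y) * incGamma n (d * y)) = 0 := by
  have hderiv : deriv (fun t ↦ exp (c * t) * incGamma n (d * t)) = fun t ↦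
      c * (exp (c * t) * incGamma n (d * t)) - d * ((d * t) ^ n * exp ((c - d) * t)) :=
    funext fun t ↦ (hasDerivAt_exp_mul_incGamma n c d t).deriv
  rw [hderiv, (((hasDerivAt_exp_mul_incGamma n c d y).const_mul c).fun_sub
    ((hasDerivAt_pow_mul_exp n d (c - d) y).const_mul d)).deriv]
  have euler := mul_natCast_mul_pow_sub_one n (d * y)
  subst hd
  linear_combination (-(2 * c) * exp ((c - 2 * c) * y)) * euler

lemma eq_zero_of_eventually_add_mul_eq_zero {f : ℝ → ℝ} {f' x₀ c₁ c₂ : ℝ}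
    (hf : HasDerivAt f f' x₀) (hf' : f' ≠ 0) (h : ∀ᶠ x in 𝓝 x₀, c₁ + c₂ * f x = 0) :
    c₁ = 0 ∧ c₂ = 0 := by
  have hc₂ : c₂ = 0 := by
    by_contra hc₂
    have hconst : ∀ᶠ x in 𝓝[≠] x₀, f x = -c₁ / c₂ :=
      nhdsWithin_le_nhds <| h.mono fun x hx ↦ by field_simp; linarith
    exact (hconst.and (hf.eventually_ne hf')).exists.elim fun _ hx ↦ hx.2 hx.1
  refine ⟨?_, hc₂⟩
  simpa [hc₂] using h.self_of_nhds

theorem ode_solutions_linear_independent_general (a : ℝ) (ha : 0 < a) (κ : ℕ)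
    (β : ℝ) (hβ : β ≠ 0) :
    (∀ y ∈ Set.Ioi (0 : ℝ),
      y * deriv (deriv (fun t : ℝ => Real.exp (-2 * a * β * t))) y
        - 2 * κ * deriv (fun t : ℝ => Real.exp (-2 * a * β * t)) y
        - (4 * κ * a * β + 4 * a ^ 2 * β ^ 2 * y) * Real.exp (-2 * a * β * y) = 0) ∧
    (∀ y ∈ Set.Ioi (0 : ℝ),
      y * deriv (deriv (fun t : ℝ => Real.exp (-2 * a * β * t) * incGamma (2 * κ) (-4 * a * β * t))) y
        - 2 * κ * deriv (fun t : ℝ => Real.exp (-2 * a * β * t) * incGamma (2 * κ) (-4 * a * β * t)) y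
        - (4 * κ * a * β + 4 * a ^ 2 * β ^ 2 * y) *
            (Real.exp (-2 * a * β * y) * incGamma (2 * κ) (-4 * a * β * y)) = 0) ∧
    (∀ c₁ c₂ : ℝ,
      (∀ y ∈ Set.Ioi (0 : ℝ),
        c₁ * Real.exp (-2 * a * β * y)
          + c₂ * (Real.exp (-2 * a * β * y) * incGamma (2 * κ) (-4 * a * β * y)) = 0) →
      c₁ = 0 ∧ c₂ = 0) := by
  refine ⟨fun y _ ↦ ?_, fun y _ ↦ ?_, fun c₁ c₂ h ↦ ?_⟩
  · have hode := exp_mul_solves_ode (2 * κ) (-2 * a * β) y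
    push_cast at hode
    linear_combination hode
  · have hode := exp_mul_incGamma_solves_ode (2 * κ) (-2 * a * β) (-4 * a * β) (by ring) y
    push_cast at hode
    linear_combination hode
  · refine eq_zero_of_eventually_add_mul_eq_zero
      (hasDerivAt_incGamma_comp_mul (2 * κ) (-4 * a * β) 1) (by simp [ha.ne', hβ]) ?_
    filter_upwards [Ioi_mem_nhds one_pos] with y hy
    have hexp := exp_ne_zero (-2 * a * β * y)
    apply mul_left_cancel₀ hexp
    linear_combination h y hy

/-- For `a > 0`, integer `κ ≥ 2` and real `β ≠ 0`, the functions
`I₁(y) = e^{-2aβy}` and `I₂(y) = e^{-2aβy} Γ(2κ+1, -4aβy)` are linearly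
independent solutions on `(0,∞)` of
`y I'' - 2κ I' - (4κaβ + 4a²β²y) I = 0`. -/
theorem ode_solutions_linear_independent (a : ℝ) (ha : 0 < a) (κ : ℕ) (hκ : 2 ≤ κ)
    (β : ℝ) (hβ : β ≠ 0) :
    (∀ y ∈ Set.Ioi (0 : ℝ),
      y * deriv (deriv (fun t : ℝ => Real.exp (-2 * a * β * t))) y
        - 2 * κ * deriv (fun t : ℝ => Real.exp (-2 * a * β * t)) y
        - (4 * κ * a * β + 4 * a ^ 2 * β ^ 2 * y) * Real.exp (-2 * a * β * y) = 0) ∧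
    (∀ y ∈ Set.Ioi (0 : ℝ),
      y * deriv (deriv (fun t : ℝ => Real.exp (-2 * a * β * t) * incGamma (2 * κ) (-4 * a * β * t))) y
        - 2 * κ * deriv (fun t : ℝ => Real.exp (-2 * a * β * t) * incGamma (2 * κ) (-4 * a * β * t)) y
        - (4 * κ * a * β + 4 * a ^ 2 * β ^ 2 * y) *
            (Real.exp (-2 * a * β * y) * incGamma (2 * κ) (-4 * a * β * y)) = 0) ∧
    (∀ c₁ c₂ : ℝ,
      (∀ y ∈ Set.Ioi (0 : ℝ),
        c₁ * Real.exp (-2 * a * β * y)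
          + c₂ * (Real.exp (-2 * a * β * y) * incGamma (2 * κ) (-4 * a * β * y)) = 0) →
      c₁ = 0 ∧ c₂ = 0) :=
  ode_solutions_linear_independent_general a ha κ β hβ
end

section
/- Let \kappa \geq 2 be an integer and a a real number. Acting with the Maass raising operator R_{\kappa - 3/2} = 2i \partial/\partial\tau + (\kappa - 3/2) v^{-1} on the function \tau = u + iv \mapsto v^{-(\kappa-2)/2} H_{\kappa - 2}(a\sqrt{v}) e^{i a^2 \tau / 2} yields -\frac{1}{4} v^{-\kappa/2} H_{\kappa}(a\sqrt{v}) e^{i a^2 \tau/2}. -/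
/-- The function `τ = u + iv ↦ v^{-(κ-2)/2} H_{κ-2}(a√v) e^{i a² τ/2}`. -/
noncomputable def fRaise (κ : ℕ) (a u v : ℝ) : ℂ :=
  ((v ^ (-((κ : ℝ) - 2) / 2) * Hr (κ - 2) (a * Real.sqrt v) : ℝ) : ℂ) *
    Complex.exp (Complex.I * (a : ℂ) ^ 2 * ((u : ℂ) + (v : ℂ) * Complex.I) / 2)

/-!
Write `f(τ) = g(v) e(τ)` with `e(τ) = e^{i a² τ/2}` and `g(v) = v^{-n/2} H_n(a√v)`, `n = κ - 2`.
Since `∂g/∂τ = -(i/2) g'` and `e` is holomorphic with `∂e/∂τ = (i a²/2) e`,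
the raising operator becomes `R_{n+1/2} f = (g' - a² g + (n + 1/2) v⁻¹ g) e`.
Substituting `x = a√v`, the bracket is `-¼ v^{-(n+2)/2}` times
`(4x² - 2n - 2) H_n(x) - 2x H_n'(x)`, which is `H_{n+2}(x)` by the Hermite recurrence
together with `H_{n+1}' = 2(n+1) H_n`.
-/

open Complex Polynomial

lemma hermiteH_succ (n : ℕ) :
    hermiteH (n + 1) = 2 * X * hermiteH n - derivative (hermiteH n) := rfl

lemma derivative_hermiteH_succ (n : ℕ) :
    derivative (hermiteH (n + 1)) = C (2 * ((n : ℤ) + 1)) * hermiteH n := by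
  induction n with
  | zero => simp [hermiteH]
  | succ n ih =>
    have hd : derivative (hermiteH n) = 2 * X * hermiteH n - hermiteH (n + 1) := by
      rw [hermiteH_succ]; ring
    simp only [hermiteH_succ (n + 1), derivative_sub, derivative_mul, ih, derivative_C,
      derivative_X, hd]
    push_cast [map_mul, map_add, map_ofNat, derivative_ofNat, C_1]
    ring

lemma hermiteH_add_two (n : ℕ) :
    hermiteH (n + 2) =
      (4 * X ^ 2 - C (2 * (n : ℤ) + 2)) * hermiteH n - 2 * X * derivative (hermiteH n) := by
  rw [hermiteH_succ (n + 1), derivative_hermiteH_succ, hermiteH_succ n]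
  push_cast [map_mul, map_add, map_ofNat, C_1]
  ring

lemma Hr_add_two (n : ℕ) (x : ℝ) :
    Hr (n + 2) x =
      (4 * x ^ 2 - (2 * n + 2)) * Hr n x - 2 * x * aeval x (derivative (hermiteH n)) := by
  simp [Hr, hermiteH_add_two, map_ofNat]

lemma hasDerivAt_Hr (n : ℕ) (x : ℝ) :
    HasDerivAt (Hr n) (aeval x (derivative (hermiteH n))) x :=
  (hermiteH n).hasDerivAt_aeval x

noncomputable def hermiteProfile (n : ℕ) (a v : ℝ) : ℝ := v ^ (-(n : ℝ) / 2) * Hr n (a * √v)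

noncomputable def expPhase (a u v : ℝ) : ℂ := exp (I * (a : ℂ) ^ 2 * ((u : ℂ) + (v : ℂ) * I) / 2)

lemma hasDerivAt_expPhase_re (a u v : ℝ) :
    HasDerivAt (fun u' : ℝ => expPhase a u' v) (I * (a : ℂ) ^ 2 / 2 * expPhase a u v) u := by
  have hτ : HasDerivAt (fun u' : ℝ => (u' : ℂ) + (v : ℂ) * I) 1 u := by
    simpa using (hasDerivAt_id u).ofReal_comp.add_const ((v : ℂ) * I)
  unfold expPhase
  convert ((hτ.const_mul (I * (a : ℂ) ^ 2)).div_const 2).cexp using 1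
  ring

lemma hasDerivAt_expPhase_im (a u v : ℝ) :
    HasDerivAt (fun v' : ℝ => expPhase a u v') (-((a : ℂ) ^ 2) / 2 * expPhase a u v) v := by
  have hτ : HasDerivAt (fun v' : ℝ => (u : ℂ) + (v' : ℂ) * I) I v := by
    simpa using ((hasDerivAt_id v).ofReal_comp.mul_const I).const_add (u : ℂ)
  unfold expPhase
  convert ((hτ.const_mul (I * (a : ℂ) ^ 2)).div_const 2).cexp using 1
  ring_nf; rw [I_sq]; ring

lemma raising_mul_expPhase {g : ℝ → ℝ} {g' : ℝ} (k a u v : ℝ) (hg : HasDerivAt g g' v) :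
    2 * I * ((1 / 2) *
        (deriv (fun u' : ℝ => (g v : ℂ) * expPhase a u' v) u
          - I * deriv (fun v' : ℝ => (g v' : ℂ) * expPhase a u v') v))
      + (k : ℂ) / v * ((g v : ℂ) * expPhase a u v)
    = ((g' - a ^ 2 * g v + k / v * g v : ℝ) : ℂ) * expPhase a u v := by
  rw [((hasDerivAt_expPhase_re a u v).const_mul (g v : ℂ)).deriv,
    (hg.ofReal_comp.mul (hasDerivAt_expPhase_im a u v)).deriv
      (f := fun v' : ℝ => (g v' : ℂ) * expPhase a u v')]
  push_cast
  ring_nf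
  rw [I_sq]
  ring

lemma hasDerivAt_hermiteProfile (n : ℕ) (a : ℝ) {v : ℝ} (hv : 0 < v) :
    HasDerivAt (hermiteProfile n a)
      (-(n : ℝ) / 2 * v ^ (-(n : ℝ) / 2 - 1) * Hr n (a * √v)
        + v ^ (-(n : ℝ) / 2) * (aeval (a * √v) (derivative (hermiteH n)) * (a * (1 / (2 * √v)))))
      v :=
  (Real.hasDerivAt_rpow_const (Or.inl hv.ne')).mul
    ((hasDerivAt_Hr n _).comp v ((Real.hasDerivAt_sqrt hv.ne').const_mul a))

lemma hermiteProfile_raising (n : ℕ) (a : ℝ) {v : ℝ} (hv : 0 < v) :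
    deriv (hermiteProfile n a) v - a ^ 2 * hermiteProfile n a v
        + ((n : ℝ) + 1 / 2) / v * hermiteProfile n a v
      = -(1 / 4) * hermiteProfile (n + 2) a v := by
  have hpow : v ^ (-(n : ℝ) / 2) = v ^ (-(n : ℝ) / 2 - 1) * v := by
    rw [← Real.rpow_add_one hv.ne']; norm_num
  have hpow' : v ^ (-((n + 2 : ℕ) : ℝ) / 2) = v ^ (-(n : ℝ) / 2 - 1) := by
    congr 1; push_cast; ring
  rw [(hasDerivAt_hermiteProfile n a hv).deriv, hermiteProfile, hermiteProfile, Hr_add_two, hpow,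
    hpow']
  have hs : 0 < √v := Real.sqrt_pos.2 hv
  set s := √v
  rw [← Real.sq_sqrt hv.le]
  field_simp
  ring

/-- Applying the Maass raising operator
`R_{κ-3/2} = 2i ∂/∂τ + (κ - 3/2) v⁻¹`, with `∂/∂τ = ½(∂/∂u - i ∂/∂v)`, to
`v^{-(κ-2)/2} H_{κ-2}(a√v) e^{i a² τ/2}` yields
`-(1/4) v^{-κ/2} H_κ(a√v) e^{i a² τ/2}`. -/
theorem raising_hermite (κ : ℕ) (hκ : 2 ≤ κ) (a u v : ℝ) (hv : 0 < v) :
    2 * Complex.I * ((1 / 2) *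
        (deriv (fun u' : ℝ => fRaise κ a u' v) u
          - Complex.I * deriv (fun v' : ℝ => fRaise κ a u v') v))
      + ((κ : ℂ) - 3 / 2) / (v : ℂ) * fRaise κ a u v
    = -(1 / 4) * ((v ^ (-(κ : ℝ) / 2) * Hr κ (a * Real.sqrt v) : ℝ) : ℂ) *
        Complex.exp (Complex.I * (a : ℂ) ^ 2 * ((u : ℂ) + (v : ℂ) * Complex.I) / 2) := by
  obtain ⟨n, rfl⟩ := Nat.exists_eq_add_of_le' hκ
  have hf : ∀ u' v', fRaise (n + 2) a u' v' = (hermiteProfile n a v' : ℂ) * expPhase a u' v' := by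
    intro u' v'
    rw [fRaise, hermiteProfile, expPhase, Nat.add_sub_cancel,
      show -(((n + 2 : ℕ) : ℝ) - 2) / 2 = -(n : ℝ) / 2 by push_cast; ring]
  have hk : ((n + 2 : ℕ) : ℂ) - 3 / 2 = (((n : ℝ) + 1 / 2 : ℝ) : ℂ) := by push_cast; ring
  simp only [hf, hk]
  rw [raising_mul_expPhase _ a u v (hasDerivAt_hermiteProfile n a hv).differentiableAt.hasDerivAt,
    hermiteProfile_raising n a hv, hermiteProfile, expPhase]
  push_cast
  ring
end
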